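/- Let n ≥ 1, s₁, s₂ ∈ ℝ and 1 ≤ p, q₁, q₂ ≤ ∞ with q₁ > q₂ and s₁ − s₂ > n(1/q₂ − 1/q₁) (with the convention 1/∞ = 0). Then there exists a constant C > 0 such that ‖f‖_{W^{s₂}_{p,q₂}} ≤ C ‖f‖_{W^{s₁}_{p,q₁}} for all f ∈ 𝒮(ℝⁿ). -/

import Mathlib

open MeasureTheory Real
open scoped ENNReal RealInnerProductSpace

noncomputable section

/-- The short-time Fourier transform
`V_g f (x, ξ) = ∫ e^{-i ξ·t} conj (g (t - x)) f t dt`. -/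
def STFT {n : ℕ} (g f : EuclideanSpace ℝ (Fin n) → ℂ)
    (x ξ : EuclideanSpace ℝ (Fin n)) : ℂ :=
  ∫ t : EuclideanSpace ℝ (Fin n),
    Complex.exp (-(Complex.I * Complex.ofReal ⟪ξ, t⟫)) * (starRingEnd ℂ) (g (t - x)) * f t

/-- The Fourier transform `f̂ (ξ) = ∫ e^{-i ξ·x} f x dx`. -/
def FT {n : ℕ} (f : EuclideanSpace ℝ (Fin n) → ℂ) (ξ : EuclideanSpace ℝ (Fin n)) : ℂ :=
  ∫ x : EuclideanSpace ℝ (Fin n),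
    Complex.exp (-(Complex.I * Complex.ofReal ⟪ξ, x⟫)) * f x

/-- The power of the Japanese bracket `⟨x⟩ˢ = (1 + |x|²)^(s/2)`. -/
def jp {n : ℕ} (s : ℝ) (x : EuclideanSpace ℝ (Fin n)) : ℝ := (1 + ‖x‖ ^ 2) ^ (s / 2)

/-- The Gaussian window `g₀ (t) = e^{-|t|²}`. -/
def gauss {n : ℕ} (t : EuclideanSpace ℝ (Fin n)) : ℂ := Complex.ofReal (Real.exp (-‖t‖ ^ 2))

/-- The `L^p` norm (valued in `ℝ≥0∞`) of an `ℝ≥0∞`-valued function. -/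
def lpN {n : ℕ} (p : ℝ≥0∞) (F : EuclideanSpace ℝ (Fin n) → ℝ≥0∞) : ℝ≥0∞ :=
  if p = ∞ then essSup F volume
  else (∫⁻ x, F x ^ p.toReal) ^ p.toReal⁻¹

/-- The Wiener amalgam space norm `‖f‖_{W^s_{p,q}}`:
inner `L^q` norm in the frequency variable ξ, outer `L^p` norm in the space variable x,
with the Gaussian window. -/
def WNorm {n : ℕ} (s : ℝ) (p q : ℝ≥0∞) (f : EuclideanSpace ℝ (Fin n) → ℂ) : ℝ≥0∞ :=
  lpN p (fun x => lpN q (fun ξ => ENNReal.ofReal (jp s ξ) * (‖STFT gauss f x ξ‖₊ : ℝ≥0∞)))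

/-- The modulation space norm `‖f‖_{M^s_{p,q}}`:
inner `L^p` norm in the space variable x, outer `L^q` norm in the frequency variable ξ,
with the Gaussian window. -/
def MNorm {n : ℕ} (s : ℝ) (p q : ℝ≥0∞) (f : EuclideanSpace ℝ (Fin n) → ℂ) : ℝ≥0∞ :=
  lpN q (fun ξ => lpN p (fun x => ENNReal.ofReal (jp s ξ) * (‖STFT gauss f x ξ‖₊ : ℝ≥0∞)))

/-- The Schrödinger operator `e^{iεΔ} f = ℱ⁻¹ [ξ ↦ e^{-iε|ξ|²} f̂ (ξ)]` (`ε = ±1`). -/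
def schrod {n : ℕ} (ε : ℝ) (f : EuclideanSpace ℝ (Fin n) → ℂ)
    (x : EuclideanSpace ℝ (Fin n)) : ℂ :=
  (((2 * Real.pi) ^ n)⁻¹ : ℝ) *
    ∫ ξ : EuclideanSpace ℝ (Fin n),
      Complex.exp (Complex.I * Complex.ofReal ⟪x, ξ⟫) *
        Complex.exp (-(Complex.ofReal ε * Complex.I * Complex.ofReal (‖ξ‖ ^ 2))) * FT f ξ

/-- The lattice point `k ∈ ℤⁿ` viewed as a point of `ℝⁿ`. -/
def zlift {n : ℕ} (k : Fin n → ℤ) : EuclideanSpace ℝ (Fin n) :=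
  (WithLp.equiv 2 (Fin n → ℝ)).symm fun i => (k i : ℝ)


section Aux

variable {n : ℕ}

lemma jp_pos (s : ℝ) (x : EuclideanSpace ℝ (Fin n)) : 0 < jp s x := by
  unfold jp; positivity

lemma jp_add (s t : ℝ) (x : EuclideanSpace ℝ (Fin n)) :
    jp (s + t) x = jp s x * jp t x := by
  unfold jp
  rw [← Real.rpow_add (by positivity), add_div]

lemma jp_rpow (s e : ℝ) (x : EuclideanSpace ℝ (Fin n)) :
    jp s x ^ e = jp (s * e) x := by
  unfold jp
  rw [← Real.rpow_mul (by positivity)]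
  ring_nf

lemma continuous_jp (s : ℝ) : Continuous (jp (n := n) s) := by
  unfold jp
  exact (continuous_const.add ((continuous_norm).pow 2)).rpow_const
    (fun x => Or.inl (by positivity : (1:ℝ) + ‖x‖ ^ 2 ≠ 0))

lemma jp_lintegral_lt_top {a : ℝ} (ha : (n : ℝ) < a) :
    ∫⁻ ξ : EuclideanSpace ℝ (Fin n), ENNReal.ofReal (jp (-a) ξ) < ∞ := by
  have hfr : (Module.finrank ℝ (EuclideanSpace ℝ (Fin n)) : ℝ) < a := by
    simpa using ha
  have hi : Integrable
      (fun ξ : EuclideanSpace ℝ (Fin n) => ((1 : ℝ) + ‖ξ‖ ^ 2) ^ (-a / 2)) :=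
    integrable_rpow_neg_one_add_norm_sq hfr
  simpa [jp, neg_div] using hi.lintegral_lt_top

lemma lpN_mono_ae {p : ℝ≥0∞} {F G : EuclideanSpace ℝ (Fin n) → ℝ≥0∞}
    (h : F ≤ᵐ[volume] G) : lpN p F ≤ lpN p G := by
  unfold lpN
  split_ifs
  · exact essSup_mono_ae h
  · refine ENNReal.rpow_le_rpow (lintegral_mono_ae (h.mono fun x hx => ?_))
      (by positivity)
    exact ENNReal.rpow_le_rpow hx ENNReal.toReal_nonneg

lemma lpN_const_mul {p : ℝ≥0∞} (hp0 : p ≠ 0) (c : ℝ≥0∞) (hc : c ≠ ∞)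
    (F : EuclideanSpace ℝ (Fin n) → ℝ≥0∞) :
    lpN p (fun x => c * F x) = c * lpN p F := by
  unfold lpN
  split_ifs with h
  · exact ENNReal.essSup_const_mul
  · simp_rw [ENNReal.mul_rpow_of_nonneg _ _ ENNReal.toReal_nonneg]
    rw [lintegral_const_mul' _ _ (ENNReal.rpow_ne_top_of_nonneg ENNReal.toReal_nonneg hc),
      ENNReal.mul_rpow_of_nonneg _ _ (inv_nonneg.mpr ENNReal.toReal_nonneg),
      ← ENNReal.rpow_mul, mul_inv_cancel₀ (ENNReal.toReal_ne_zero.mpr ⟨hp0, h⟩),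
      ENNReal.rpow_one]

lemma stft_measurable (f : SchwartzMap (EuclideanSpace ℝ (Fin n)) ℂ)
    (x : EuclideanSpace ℝ (Fin n)) :
    Measurable (fun ξ : EuclideanSpace ℝ (Fin n) =>
      (‖STFT gauss (⇑f) x ξ‖₊ : ℝ≥0∞)) := by
  have hgc : Continuous (gauss (n := n)) := by
    unfold gauss
    exact Complex.continuous_ofReal.comp (Real.continuous_exp.comp
      ((continuous_norm.pow 2).neg))
  have hc : Continuous (fun q : EuclideanSpace ℝ (Fin n) × EuclideanSpace ℝ (Fin n) =>
      Complex.exp (-(Complex.I * Complex.ofReal ⟪q.1, q.2⟫)) *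
        (starRingEnd ℂ) (gauss (q.2 - x)) * f q.2) := by
    refine Continuous.mul (Continuous.mul ?_ ?_) (f.continuous.comp continuous_snd)
    · exact Complex.continuous_exp.comp
        ((continuous_const.mul (Complex.continuous_ofReal.comp continuous_inner)).neg)
    · exact continuous_star.comp (hgc.comp (continuous_snd.sub continuous_const))
  have hsm : StronglyMeasurable (fun ξ : EuclideanSpace ℝ (Fin n) =>
      STFT gauss (⇑f) x ξ) :=
    hc.stronglyMeasurable.integral_prod_right'
  exact hsm.measurable.nnnorm.coe_nnreal_ennreal

/-- Hölder-type inequality for weighted `L^q` norms. -/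
lemma inner_holder (n : ℕ) (s₁ s₂ : ℝ) (q₁ q₂ : ℝ≥0∞)
    (hq₁ : 1 ≤ q₁) (hq₂ : 1 ≤ q₂) (hq : q₂ < q₁)
    (hs : (n : ℝ) * (q₂⁻¹.toReal - q₁⁻¹.toReal) < s₁ - s₂) :
    ∃ C : ℝ≥0∞, C ≠ ∞ ∧ ∀ u : EuclideanSpace ℝ (Fin n) → ℝ≥0∞, AEMeasurable u →
      lpN q₂ (fun ξ => ENNReal.ofReal (jp s₂ ξ) * u ξ) ≤
        C * lpN q₁ (fun ξ => ENNReal.ofReal (jp s₁ ξ) * u ξ) := by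
  have hq₂ne : q₂ ≠ ∞ := (hq.trans_le le_top).ne
  have hq₂0 : q₂ ≠ 0 := (lt_of_lt_of_le zero_lt_one hq₂).ne'
  have h2pos : 0 < q₂.toReal := ENNReal.toReal_pos hq₂0 hq₂ne
  set a : ℝ := s₁ - s₂ with ha_def
  -- pointwise splitting of the weight
  have hsplit : ∀ (u : EuclideanSpace ℝ (Fin n) → ℝ≥0∞)
      (ξ : EuclideanSpace ℝ (Fin n)),
      ENNReal.ofReal (jp s₂ ξ) * u ξ =
        ENNReal.ofReal (jp (-a) ξ) * (ENNReal.ofReal (jp s₁ ξ) * u ξ) := by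
    intro u ξ
    rw [← mul_assoc, ← ENNReal.ofReal_mul (jp_pos (-a) ξ).le, ← jp_add]
    norm_num [ha_def]
  rcases eq_or_ne q₁ ∞ with rfl | hq₁ne
  · -- case q₁ = ∞
    have hna : (n : ℝ) < a * q₂.toReal := by
      have h0 : q₂⁻¹.toReal = q₂.toReal⁻¹ := ENNReal.toReal_inv q₂
      have : (n : ℝ) * q₂.toReal⁻¹ < a := by simpa [h0] using hs
      calc (n : ℝ) = (n : ℝ) * q₂.toReal⁻¹ * q₂.toReal := by
            field_simp
        _ < a * q₂.toReal := by
            exact mul_lt_mul_of_pos_right this h2pos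
    set K : ℝ≥0∞ := ∫⁻ ξ : EuclideanSpace ℝ (Fin n),
      ENNReal.ofReal (jp (-(a * q₂.toReal)) ξ) with hK_def
    have hK : K ≠ ∞ := (jp_lintegral_lt_top hna).ne
    refine ⟨K ^ q₂.toReal⁻¹, ENNReal.rpow_ne_top_of_nonneg (by positivity) hK, ?_⟩
    intro u hu
    set M : ℝ≥0∞ := essSup (fun ξ => ENNReal.ofReal (jp s₁ ξ) * u ξ) volume with hM_def
    have hRHS : lpN ∞ (fun ξ => ENNReal.ofReal (jp s₁ ξ) * u ξ) = M := by
      simp [lpN, hM_def]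
    have hae : ∀ᵐ ξ ∂(volume : Measure (EuclideanSpace ℝ (Fin n))),
        ENNReal.ofReal (jp s₂ ξ) * u ξ ≤ ENNReal.ofReal (jp (-a) ξ) * M := by
      filter_upwards [ae_le_essSup (f := fun ξ => ENNReal.ofReal (jp s₁ ξ) * u ξ)] with ξ hξ
      rw [hsplit u ξ]
      exact mul_le_mul_right hξ _
    calc lpN q₂ (fun ξ => ENNReal.ofReal (jp s₂ ξ) * u ξ)
        ≤ lpN q₂ (fun ξ => ENNReal.ofReal (jp (-a) ξ) * M) := lpN_mono_ae hae
      _ = K ^ q₂.toReal⁻¹ * M := by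
          unfold lpN
          rw [if_neg hq₂ne]
          have hptw : ∀ ξ : EuclideanSpace ℝ (Fin n),
              (ENNReal.ofReal (jp (-a) ξ) * M) ^ q₂.toReal =
                ENNReal.ofReal (jp (-(a * q₂.toReal)) ξ) * M ^ q₂.toReal := by
            intro ξ
            rw [ENNReal.mul_rpow_of_nonneg _ _ h2pos.le,
              ENNReal.ofReal_rpow_of_pos (jp_pos _ _), jp_rpow]
            ring_nf
          simp_rw [hptw]
          rw [lintegral_mul_const _ ((continuous_jp (-(a * q₂.toReal))).measurable.ennreal_ofReal),
            ENNReal.mul_rpow_of_nonneg _ _ (by positivity),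
            ← ENNReal.rpow_mul, mul_inv_cancel₀ h2pos.ne', ENNReal.rpow_one, ← hK_def]
      _ = K ^ q₂.toReal⁻¹ * lpN ∞ (fun ξ => ENNReal.ofReal (jp s₁ ξ) * u ξ) := by
          rw [hRHS]
  · -- case q₁ < ∞
    have hq₁0 : q₁ ≠ 0 := (lt_of_lt_of_le zero_lt_one hq₁).ne'
    have h1pos : 0 < q₁.toReal := ENNReal.toReal_pos hq₁0 hq₁ne
    have hlt : q₂.toReal < q₁.toReal :=
      (ENNReal.toReal_lt_toReal hq₂ne hq₁ne).mpr hq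
    have hδpos : 0 < q₂.toReal⁻¹ - q₁.toReal⁻¹ := by
      rw [sub_pos]
      exact inv_strictAnti₀ h2pos hlt
    set r : ℝ := (q₂.toReal⁻¹ - q₁.toReal⁻¹)⁻¹ with hr_def
    have hrpos : 0 < r := inv_pos.mpr hδpos
    have hna : (n : ℝ) < a * r := by
      have h0₂ : q₂⁻¹.toReal = q₂.toReal⁻¹ := ENNReal.toReal_inv q₂
      have h0₁ : q₁⁻¹.toReal = q₁.toReal⁻¹ := ENNReal.toReal_inv q₁
      have h1 : (n : ℝ) * r⁻¹ < a := by
        rw [hr_def, inv_inv]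
        simpa [h0₂, h0₁] using hs
      calc (n : ℝ) = (n : ℝ) * r⁻¹ * r := by field_simp
        _ < a * r := mul_lt_mul_of_pos_right h1 hrpos
    set K : ℝ≥0∞ := ∫⁻ ξ : EuclideanSpace ℝ (Fin n),
      ENNReal.ofReal (jp (-(a * r)) ξ) with hK_def
    have hK : K ≠ ∞ := (jp_lintegral_lt_top hna).ne
    refine ⟨K ^ r⁻¹, ENNReal.rpow_ne_top_of_nonneg (by positivity) hK, ?_⟩
    intro u hu
    have hfmeas : AEMeasurable (fun ξ => ENNReal.ofReal (jp s₁ ξ) * u ξ) volume :=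
      ((continuous_jp s₁).measurable.ennreal_ofReal).aemeasurable.mul hu
    have hgmeas : AEMeasurable
        (fun ξ : EuclideanSpace ℝ (Fin n) => ENNReal.ofReal (jp (-a) ξ)) volume :=
      ((continuous_jp (-a)).measurable.ennreal_ofReal).aemeasurable
    have hpqr : 1 / q₂.toReal = 1 / q₁.toReal + 1 / r := by
      rw [hr_def, one_div, one_div, one_div, inv_inv]
      ring
    have hH := ENNReal.lintegral_Lp_mul_le_Lq_mul_Lr (p := q₂.toReal) (q := q₁.toReal)
      (r := r) h2pos hlt hpqr volume hfmeas hgmeas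
    have hprod : (fun ξ => ((fun ξ => ENNReal.ofReal (jp s₁ ξ) * u ξ) *
        (fun ξ : EuclideanSpace ℝ (Fin n) => ENNReal.ofReal (jp (-a) ξ))) ξ ^ q₂.toReal) =
        fun ξ => (ENNReal.ofReal (jp s₂ ξ) * u ξ) ^ q₂.toReal := by
      funext ξ
      rw [hsplit u ξ]
      simp [Pi.mul_apply]
      ring_nf
    have hKr : (∫⁻ ξ : EuclideanSpace ℝ (Fin n),
        ENNReal.ofReal (jp (-a) ξ) ^ r) = K := by
      rw [hK_def]
      congr 1
      funext ξ
      rw [ENNReal.ofReal_rpow_of_pos (jp_pos _ _), jp_rpow]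
      ring_nf
    rw [hprod, hKr] at hH
    unfold lpN
    rw [if_neg hq₂ne, if_neg hq₁ne]
    calc (∫⁻ ξ, (ENNReal.ofReal (jp s₂ ξ) * u ξ) ^ q₂.toReal) ^ q₂.toReal⁻¹
        = (∫⁻ ξ, (ENNReal.ofReal (jp s₂ ξ) * u ξ) ^ q₂.toReal) ^ (1 / q₂.toReal) := by
          rw [one_div]
      _ ≤ (∫⁻ ξ, (ENNReal.ofReal (jp s₁ ξ) * u ξ) ^ q₁.toReal) ^ (1 / q₁.toReal) *
            K ^ (1 / r) := hH
      _ = K ^ r⁻¹ *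
            (∫⁻ ξ, (ENNReal.ofReal (jp s₁ ξ) * u ξ) ^ q₁.toReal) ^ q₁.toReal⁻¹ := by
          rw [one_div, one_div, mul_comm]

end Aux

/-- Basic embedding of Wiener amalgam spaces: `W^{s₁}_{p,q₁} ↪ W^{s₂}_{p,q₂}` when
`q₁ > q₂` and `s₁ - s₂ > n (1/q₂ - 1/q₁)` (with `1/∞ = 0`). -/
theorem wiener_amalgam_embedding_q (n : ℕ) (hn : 1 ≤ n) (s₁ s₂ : ℝ) (p q₁ q₂ : ℝ≥0∞)
    (hp : 1 ≤ p) (hq₁ : 1 ≤ q₁) (hq₂ : 1 ≤ q₂) (hq : q₂ < q₁)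
    (hs : (n : ℝ) * (q₂⁻¹.toReal - q₁⁻¹.toReal) < s₁ - s₂) :
    ∃ C : ℝ, 0 < C ∧ ∀ f : SchwartzMap (EuclideanSpace ℝ (Fin n)) ℂ,
      WNorm s₂ p q₂ ⇑f ≤ ENNReal.ofReal C * WNorm s₁ p q₁ ⇑f := by
  obtain ⟨C0, hC0, hH⟩ := inner_holder n s₁ s₂ q₁ q₂ hq₁ hq₂ hq hs
  refine ⟨max 1 C0.toReal, lt_of_lt_of_le one_pos (le_max_left _ _), fun f => ?_⟩
  have hp0 : p ≠ 0 := (lt_of_lt_of_le zero_lt_one hp).ne'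
  have hC0' : C0 ≤ ENNReal.ofReal (max 1 C0.toReal) := by
    calc C0 = ENNReal.ofReal C0.toReal := (ENNReal.ofReal_toReal hC0).symm
      _ ≤ _ := ENNReal.ofReal_le_ofReal (le_max_right _ _)
  unfold WNorm
  calc lpN p (fun x => lpN q₂ (fun ξ =>
        ENNReal.ofReal (jp s₂ ξ) * (‖STFT gauss (⇑f) x ξ‖₊ : ℝ≥0∞)))
      ≤ lpN p (fun x => C0 * lpN q₁ (fun ξ =>
        ENNReal.ofReal (jp s₁ ξ) * (‖STFT gauss (⇑f) x ξ‖₊ : ℝ≥0∞))) := by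
        refine lpN_mono_ae (ae_of_all _ fun x => ?_)
        exact hH _ (stft_measurable f x).aemeasurable
    _ = C0 * lpN p (fun x => lpN q₁ (fun ξ =>
        ENNReal.ofReal (jp s₁ ξ) * (‖STFT gauss (⇑f) x ξ‖₊ : ℝ≥0∞))) :=
        lpN_const_mul hp0 C0 hC0 _
    _ ≤ ENNReal.ofReal (max 1 C0.toReal) * lpN p (fun x => lpN q₁ (fun ξ =>
        ENNReal.ofReal (jp s₁ ξ) * (‖STFT gauss (⇑f) x ξ‖₊ : ℝ≥0∞))) :=
        mul_le_mul' hC0' le_rfl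


end
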